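/- arXiv:2005.13234 — 3 statements merged into one kernel-verified Lean document; each statement's English description precedes it below -/
import Mathlib

section
/- Let c > 1 be a real number. Define ζ_c(x) = (c² − 1)·sech²((√3/2)·√((c² − 1)/c²)·x), h_c = 1 + ζ_c and u_c = c·ζ_c/h_c. Then u_c is smooth and for every x ∈ ℝ the travelling-wave equation ((u_c(x) − c)/(3 h_c(x)))·(h_c³ u_c')'(x) + (1/2) h_c(x)² (u_c'(x))² + c u_c(x) − ζ_c(x) − u_c(x)²/2 = 0 holds. -/
set_option maxHeartbeats 1600000 in

/-- The explicit solitary wave profile of the Serre-Green-Naghdi equations with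
velocity `c > 1` (units normalized so `g = d = 1`): with
`ζ_c(x) = (c² − 1) sech²((√3/2) √((c²−1)/c²) x)`, `h_c = 1 + ζ_c` and
`u_c = c ζ_c / h_c`, the velocity profile `u_c` is smooth and satisfies at
every point the travelling-wave ODE
`((u_c − c)/(3h_c)) (h_c³ u_c')' + ½ h_c² (u_c')² + c u_c − ζ_c − u_c²/2 = 0`. -/
theorem sgn_solitary_wave_profile (c : ℝ) (hc : 1 < c)
    (ζc : ℝ → ℝ)
    (hζc : ζc = fun x : ℝ =>
      (c ^ 2 - 1) * (1 / Real.cosh ((Real.sqrt 3 / 2) * Real.sqrt ((c ^ 2 - 1) / c ^ 2) * x)) ^ 2)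
    (hfun : ℝ → ℝ) (hh : hfun = fun x => 1 + ζc x)
    (uc : ℝ → ℝ) (hu : uc = fun x => c * ζc x / hfun x) :
    ContDiff ℝ (⊤ : ℕ∞) uc ∧
      ∀ x : ℝ,
        ((uc x - c) / (3 * hfun x)) * deriv (fun y => (hfun y) ^ 3 * deriv uc y) x
            + (1 / 2) * (hfun x) ^ 2 * (deriv uc x) ^ 2
            + c * uc x - ζc x - (uc x) ^ 2 / 2 = 0 := by
  have hc0 : (0:ℝ) < c := lt_trans one_pos hc
  have hcne : c ≠ 0 := ne_of_gt hc0
  set a : ℝ := c ^ 2 - 1 with ha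
  have ha0 : 0 < a := by rw [ha]; nlinarith
  set k : ℝ := Real.sqrt 3 / 2 * Real.sqrt (a / c ^ 2) with hk
  have hk2 : 4 * c ^ 2 * k ^ 2 = 3 * a := by
    have h3 : Real.sqrt 3 ^ 2 = 3 := Real.sq_sqrt (by norm_num)
    have hq : Real.sqrt (a / c ^ 2) ^ 2 = a / c ^ 2 := Real.sq_sqrt (by positivity)
    rw [hk, mul_pow, div_pow, h3, hq]
    field_simp
    ring
  clear_value k
  clear_value a
  have hw0 : ∀ y : ℝ, Real.cosh (k * y) ≠ 0 := fun y => ne_of_gt (Real.cosh_pos _)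
  have hne : ∀ y : ℝ, 1 + a / Real.cosh (k * y) ^ 2 ≠ 0 := fun y =>
    ne_of_gt (add_pos one_pos (div_pos ha0 (pow_pos (Real.cosh_pos _) 2)))
  have hZfun : ζc = fun y : ℝ => a / Real.cosh (k * y) ^ 2 := by
    rw [hζc]; funext y; rw [div_pow, one_pow, mul_one_div]
  have hs2 : ∀ y : ℝ, Real.sinh (k * y) ^ 2 = Real.cosh (k * y) ^ 2 - 1 := fun y =>
    Real.sinh_sq _
  have hlin : ∀ y : ℝ, HasDerivAt (fun t : ℝ => k * t) k y := fun y => by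
    simpa using (hasDerivAt_id y).const_mul k
  have hchd : ∀ y : ℝ, HasDerivAt (fun t : ℝ => Real.cosh (k * t)) (Real.sinh (k * y) * k) y :=
    fun y => (Real.hasDerivAt_cosh (k * y)).comp y (hlin y)
  have hshd : ∀ y : ℝ, HasDerivAt (fun t : ℝ => Real.sinh (k * t)) (Real.cosh (k * y) * k) y :=
    fun y => (Real.hasDerivAt_sinh (k * y)).comp y (hlin y)
  set D : ℝ → ℝ := fun y => -2 * a * k * Real.sinh (k * y) / Real.cosh (k * y) ^ 3 with hD
  clear_value D
  have hZd : ∀ y : ℝ, HasDerivAt (fun t : ℝ => a / Real.cosh (k * t) ^ 2) (D y) y := by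
    intro y
    have h1 : HasDerivAt (fun t : ℝ => Real.cosh (k * t) ^ 2)
        (2 * Real.cosh (k * y) ^ 1 * (Real.sinh (k * y) * k)) y := (hchd y).pow 2
    have h2 := (hasDerivAt_const y a).fun_div h1 (pow_ne_zero 2 (hw0 y))
    refine h2.congr_deriv ?_
    simp only [hD]
    rw [div_eq_div_iff (by positivity) (by positivity)]
    ring
  have hDd : ∀ y : ℝ, HasDerivAt D
      (3 * a ^ 2 * (2 * Real.cosh (k * y) ^ 2 - 3) / (2 * c ^ 2 * Real.cosh (k * y) ^ 4)) y := by
    intro y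
    have h1 : HasDerivAt (fun t : ℝ => -2 * a * k * Real.sinh (k * t))
        (-2 * a * k * (Real.cosh (k * y) * k)) y := (hshd y).const_mul (-2 * a * k)
    have h2 : HasDerivAt (fun t : ℝ => Real.cosh (k * t) ^ 3)
        (3 * Real.cosh (k * y) ^ 2 * (Real.sinh (k * y) * k)) y := by
      simpa using (hchd y).fun_pow 3
    have h3 := h1.fun_div h2 (pow_ne_zero 3 (hw0 y))
    rw [hD]
    refine h3.congr_deriv ?_
    symm
    rw [div_eq_div_iff (by positivity) (by positivity)]
    linear_combination (-(12 * a * c ^ 2 * k ^ 2 * Real.cosh (k * y) ^ 6)) * hs2 y +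
      (-(a * Real.cosh (k * y) ^ 6 * (2 * Real.cosh (k * y) ^ 2 - 3))) * hk2
  have hucfun : uc = fun t : ℝ =>
      c * (a / Real.cosh (k * t) ^ 2) / (1 + a / Real.cosh (k * t) ^ 2) := by
    simp only [hu, hh, hZfun]
  have hUd : ∀ y : ℝ, HasDerivAt uc (c * D y / (1 + a / Real.cosh (k * y) ^ 2) ^ 2) y := by
    intro y
    have hnum : HasDerivAt (fun t : ℝ => c * (a / Real.cosh (k * t) ^ 2)) (c * D y) y :=
      (hZd y).const_mul c
    have hden : HasDerivAt (fun t : ℝ => 1 + a / Real.cosh (k * t) ^ 2) (D y) y :=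
      (hZd y).const_add 1
    have h3 := hnum.fun_div hden (hne y)
    rw [hucfun]
    refine h3.congr_deriv ?_
    field_simp
    ring
  have hUderiv : deriv uc = fun y : ℝ => c * D y / (1 + a / Real.cosh (k * y) ^ 2) ^ 2 :=
    funext fun y => (hUd y).deriv
  have hwC : ContDiff ℝ (⊤ : ℕ∞) (fun y : ℝ => Real.cosh (k * y)) :=
    Real.contDiff_cosh.comp (contDiff_const.mul contDiff_id)
  have hZC : ContDiff ℝ (⊤ : ℕ∞) (fun y : ℝ => a / Real.cosh (k * y) ^ 2) :=
    contDiff_const.div (hwC.pow 2) fun y => pow_ne_zero 2 (hw0 y)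
  have hucC : ContDiff ℝ (⊤ : ℕ∞) uc := by
    rw [hucfun]
    exact (contDiff_const.mul hZC).div (contDiff_const.add hZC) hne
  refine ⟨hucC, fun x => ?_⟩
  have hPfun : (fun y => hfun y ^ 3 * deriv uc y)
      = fun y : ℝ => c * ((1 + a / Real.cosh (k * y) ^ 2) * D y) := by
    funext y
    simp only [hUderiv, hh, hZfun]
    field_simp
  have hPd : deriv (fun y => hfun y ^ 3 * deriv uc y) x
      = c * (D x ^ 2 + (1 + a / Real.cosh (k * x) ^ 2) *
        (3 * a ^ 2 * (2 * Real.cosh (k * x) ^ 2 - 3) / (2 * c ^ 2 * Real.cosh (k * x) ^ 4))) := by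
    rw [hPfun, ((((hZd x).const_add 1).fun_mul (hDd x)).const_mul c).deriv]
    ring
  have hDsq : D x ^ 2
      = 3 * a ^ 3 * (Real.cosh (k * x) ^ 2 - 1) / (c ^ 2 * Real.cosh (k * x) ^ 6) := by
    simp only [hD]
    rw [div_pow, div_eq_div_iff (by positivity) (by positivity)]
    linear_combination (4 * a ^ 2 * k ^ 2 * c ^ 2 * Real.cosh (k * x) ^ 6) * hs2 x +
      (a * (Real.cosh (k * x) ^ 2 - 1) * Real.cosh (k * x) ^ 6) * hk2 +
      (a * (1 - a) * (Real.cosh (k * x) ^ 6 - Real.cosh (k * x) ^ 8)) * hk2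
  have hU2 : (c * D x / (1 + a / Real.cosh (k * x) ^ 2) ^ 2) ^ 2
      = 3 * a ^ 3 * (Real.cosh (k * x) ^ 2 - 1)
        / (Real.cosh (k * x) ^ 6 * (1 + a / Real.cosh (k * x) ^ 2) ^ 4) := by
    rw [div_pow, mul_pow, hDsq, mul_div_assoc', div_div, ← pow_mul,
      div_eq_div_iff (by positivity) (by positivity)]
    ring
  have hsum : (0:ℝ) < Real.cosh (k * x) ^ 2 + (c ^ 2 - 1) := by
    have := Real.cosh_pos (k * x); nlinarith
  rw [hPd]
  simp only [hUderiv]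
  rw [hU2, hDsq]
  simp only [hu, hh, hZfun]
  rw [ha]
  rw [show (1 + (c ^ 2 - 1) / Real.cosh (k * x) ^ 2)
      = (Real.cosh (k * x) ^ 2 + (c ^ 2 - 1)) / Real.cosh (k * x) ^ 2 by
    field_simp]
  field_simp
  ring
end

section
/- Let c > 1 be a real number. Define ζ_c(x) = (c² − 1)·sech²((√3/2)·√((c² − 1)/c²)·x) and u_c = c·ζ_c/(1 + ζ_c). Then the functions ζ(t,x) := ζ_c(x − ct) and u(t,x) := u_c(x − ct), with h := 1 + ζ, satisfy for all (t,x) ∈ ℝ² both equations of the Serre–Green–Naghdi system: ∂tζ + ∂x(hu) = 0 and ∂t(u − (1/(3h))∂x(h³∂xu)) + ∂xζ + u∂xu = ∂x((u/(3h))∂x(h³∂xu) + (1/2)h²(∂xu)²). -/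
/-!
For a travelling wave `ζ = Z(x - ct)`, `u = U(x - ct)` with `U = cZ/(1 + Z)`, the mass equation
holds because `(1 + Z) U = cZ`. The momentum equation becomes the derivative of the first integral
`-c M + Z + U²/2 - F`, where `M` and `F` are the profiles of `u - (3h)⁻¹ ∂ₓ(h³∂ₓu)` and of the
dispersive flux. Since `(1 + Z)³ U' = c (1 + Z) Z'`, this first integral is a rational expression in
`Z, Z', Z''` that vanishes as soon as `c² Z'² = 3 Z² (c² - 1 - Z)` and its differentiated form
hold. The profile `(c² - 1) sech²(kx)` solves these equations when `4 c² k² = 3 (c² - 1)`, because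
`tanh² = 1 - sech²`.
-/

open Real
open scoped ContDiff

namespace SGN

/- In these terms the SGN momentum equation reads
`∂ₜ momentumDensity (h t) (u t) + ∂ₓζ + u ∂ₓu = ∂ₓ dispersiveFlux (h t) (u t)`. -/

noncomputable def momentumDensity (h u : ℝ → ℝ) (x : ℝ) : ℝ :=
  u x - 1 / (3 * h x) * deriv (fun y => h y ^ 3 * deriv u y) x

noncomputable def dispersiveFlux (h u : ℝ → ℝ) (x : ℝ) : ℝ :=
  u x / (3 * h x) * deriv (fun y => h y ^ 3 * deriv u y) x + 1 / 2 * h x ^ 2 * deriv u x ^ 2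

theorem contDiff_momentumDensity {h u : ℝ → ℝ} (hh : ContDiff ℝ ∞ h) (hu : ContDiff ℝ ∞ u)
    (h0 : ∀ x, h x ≠ 0) : ContDiff ℝ ∞ (momentumDensity h u) := by
  unfold momentumDensity
  fun_prop (disch := exact fun x => mul_ne_zero three_ne_zero (h0 x))

theorem contDiff_dispersiveFlux {h u : ℝ → ℝ} (hh : ContDiff ℝ ∞ h) (hu : ContDiff ℝ ∞ u)
    (h0 : ∀ x, h x ≠ 0) : ContDiff ℝ ∞ (dispersiveFlux h u) := by
  unfold dispersiveFlux
  fun_prop (disch := exact fun x => mul_ne_zero three_ne_zero (h0 x))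

theorem momentumDensity_comp_sub (h u : ℝ → ℝ) (b x : ℝ) :
    momentumDensity (fun y => h (y - b)) (fun y => u (y - b)) x = momentumDensity h u (x - b) := by
  simp only [momentumDensity, deriv_comp_sub_const]
  rw [deriv_comp_sub_const (f := fun y => h y ^ 3 * deriv u y)]

theorem dispersiveFlux_comp_sub (h u : ℝ → ℝ) (b x : ℝ) :
    dispersiveFlux (fun y => h (y - b)) (fun y => u (y - b)) x = dispersiveFlux h u (x - b) := by
  simp only [dispersiveFlux, deriv_comp_sub_const]
  rw [deriv_comp_sub_const (f := fun y => h y ^ 3 * deriv u y)]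

theorem deriv_comp_const_sub_mul (f : ℝ → ℝ) (c x t : ℝ) :
    deriv (fun t => f (x - c * t)) t = -c * deriv f (x - c * t) := by
  have := deriv_comp_mul_left c (fun s => f (x - s)) t
  simp only [deriv_comp_const_sub, smul_eq_mul] at this
  rw [this]; ring

/-- The second equation is the first one differentiated and divided by `Z'`; it is needed
separately where `Z'` vanishes. -/
structure IsSolitaryProfile (c : ℝ) (Z : ℝ → ℝ) : Prop where
  contDiff : ContDiff ℝ ∞ Z
  one_add_ne_zero : ∀ s, 1 + Z s ≠ 0
  deriv_sq : ∀ s, c ^ 2 * deriv Z s ^ 2 = 3 * Z s ^ 2 * (c ^ 2 - 1 - Z s)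
  deriv_deriv : ∀ s, 2 * c ^ 2 * deriv (deriv Z) s = 3 * Z s * (2 * (c ^ 2 - 1) - 3 * Z s)

section TravellingWave

variable {c : ℝ} {Z : ℝ → ℝ}

theorem hasDerivAt_mul_div_one_add {s : ℝ} (hZ : DifferentiableAt ℝ Z s) (hH : 1 + Z s ≠ 0) :
    HasDerivAt (fun s => c * Z s / (1 + Z s)) (c * deriv Z s / (1 + Z s) ^ 2) s := by
  refine ((hZ.hasDerivAt.const_mul c).fun_div (hZ.hasDerivAt.const_add 1) hH).congr_deriv ?_
  field_simp
  ring

theorem one_add_cube_mul_deriv_mul_div_one_add (hZ : Differentiable ℝ Z) (hH : ∀ s, 1 + Z s ≠ 0) :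
    (fun s => (1 + Z s) ^ 3 * deriv (fun s => c * Z s / (1 + Z s)) s)
      = fun s => c * ((1 + Z s) * deriv Z s) := by
  funext s
  rw [(hasDerivAt_mul_div_one_add (hZ s) (hH s)).deriv]
  field_simp [hH s]

theorem deriv_one_add_cube_mul_deriv_mul_div_one_add (hZ : ContDiff ℝ 2 Z)
    (hH : ∀ s, 1 + Z s ≠ 0) (s : ℝ) :
    deriv (fun s => (1 + Z s) ^ 3 * deriv (fun s => c * Z s / (1 + Z s)) s) s
      = c * (deriv Z s ^ 2 + (1 + Z s) * deriv (deriv Z) s) := by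
  have hZ1 : Differentiable ℝ Z := hZ.differentiable (by norm_num)
  have hZ2 : Differentiable ℝ (deriv Z) := hZ.differentiable_deriv_two
  rw [one_add_cube_mul_deriv_mul_div_one_add hZ1 hH,
    ((((hZ1 s).hasDerivAt.const_add 1).fun_mul (hZ2 s).hasDerivAt).const_mul c).deriv]
  ring

theorem IsSolitaryProfile.first_integral (hZ : IsSolitaryProfile c Z) (s : ℝ) :
    -c * momentumDensity (fun s => 1 + Z s) (fun s => c * Z s / (1 + Z s)) s + Z s
      + (c * Z s / (1 + Z s)) ^ 2 / 2
      - dispersiveFlux (fun s => 1 + Z s) (fun s => c * Z s / (1 + Z s)) s = 0 := by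
  have hH := hZ.one_add_ne_zero
  rw [momentumDensity, dispersiveFlux,
    deriv_one_add_cube_mul_deriv_mul_div_one_add (hZ.contDiff.of_le (by norm_cast)) hH,
    (hasDerivAt_mul_div_one_add (hZ.contDiff.differentiable (by simp) s) (hH s)).deriv]
  have := hH s
  field_simp
  linear_combination (1 + Z s) * hZ.deriv_deriv s - hZ.deriv_sq s

theorem IsSolitaryProfile.momentum_eq (hZ : IsSolitaryProfile c Z) (s : ℝ) :
    -c * deriv (momentumDensity (fun s => 1 + Z s) (fun s => c * Z s / (1 + Z s))) s + deriv Z s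
      + c * Z s / (1 + Z s) * deriv (fun s => c * Z s / (1 + Z s)) s
      = deriv (dispersiveFlux (fun s => 1 + Z s) (fun s => c * Z s / (1 + Z s))) s := by
  have hH := hZ.one_add_ne_zero
  have hZ' := hZ.contDiff
  have hU : ContDiff ℝ ∞ (fun s => c * Z s / (1 + Z s)) := by fun_prop (disch := exact hH)
  have hM := ((contDiff_momentumDensity (by fun_prop) hU hH).differentiable (by simp) s).hasDerivAt
  have hF := ((contDiff_dispersiveFlux (by fun_prop) hU hH).differentiable (by simp) s).hasDerivAt
  have hE := (((hM.const_mul (-c)).fun_add ((hZ'.differentiable (by simp) s).hasDerivAt)).fun_add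
    (((hU.differentiable (by simp) s).hasDerivAt.fun_pow 2).div_const 2)).fun_sub hF
  rw [funext hZ.first_integral] at hE
  have := hE.unique (hasDerivAt_const s 0)
  push_cast at this
  linear_combination this

end TravellingWave

section SechSqProfile

variable (a k : ℝ)

theorem tanh_sq_add_inv_cosh_sq (x : ℝ) : tanh x ^ 2 + (1 / cosh x) ^ 2 = 1 := by
  rw [tanh_eq_sinh_div_cosh]
  field_simp
  linear_combination -cosh_sq_sub_sinh_sq x

theorem hasDerivAt_tanh_mul (x : ℝ) :
    HasDerivAt (fun x => tanh (k * x)) (k * (1 / cosh (k * x)) ^ 2) x := by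
  have hkx := (hasDerivAt_id' x).const_mul k
  have h := hkx.sinh.fun_div hkx.cosh (cosh_pos (k * x)).ne'
  simp only [← tanh_eq_sinh_div_cosh] at h
  refine h.congr_deriv ?_
  field_simp
  linear_combination k * cosh_sq_sub_sinh_sq (k * x)

theorem hasDerivAt_inv_cosh_mul_sq (x : ℝ) :
    HasDerivAt (fun x => (1 / cosh (k * x)) ^ 2)
      (-2 * k * (1 / cosh (k * x)) ^ 2 * tanh (k * x)) x := by
  have hkx := (hasDerivAt_id' x).const_mul k
  refine (((hasDerivAt_const x 1).fun_div hkx.cosh (cosh_pos (k * x)).ne').fun_pow 2).congr_deriv ?_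
  rw [tanh_eq_sinh_div_cosh]
  norm_num
  field_simp

theorem deriv_sech_sq_profile :
    deriv (fun x => a * (1 / cosh (k * x)) ^ 2)
      = fun x => -2 * a * k * ((1 / cosh (k * x)) ^ 2 * tanh (k * x)) := by
  funext x
  rw [((hasDerivAt_inv_cosh_mul_sq k x).const_mul a).deriv]
  ring

theorem hasDerivAt_deriv_sech_sq_profile (x : ℝ) :
    HasDerivAt (deriv fun x => a * (1 / cosh (k * x)) ^ 2)
      (2 * a * k ^ 2 * (1 / cosh (k * x)) ^ 2 * (2 - 3 * (1 / cosh (k * x)) ^ 2)) x := by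
  rw [deriv_sech_sq_profile]
  refine (((hasDerivAt_inv_cosh_mul_sq k x).fun_mul (hasDerivAt_tanh_mul k x)).const_mul
    (-2 * a * k)).congr_deriv ?_
  linear_combination (4 * a * k ^ 2 * (1 / cosh (k * x)) ^ 2) * tanh_sq_add_inv_cosh_sq (k * x)

variable {a k} {c : ℝ} (hk : 4 * c ^ 2 * k ^ 2 = 3 * a)
include hk

theorem sech_sq_profile_deriv_sq (x : ℝ) :
    c ^ 2 * deriv (fun x => a * (1 / cosh (k * x)) ^ 2) x ^ 2
      = 3 * (a * (1 / cosh (k * x)) ^ 2) ^ 2 * (a - a * (1 / cosh (k * x)) ^ 2) := by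
  rw [deriv_sech_sq_profile]
  linear_combination (a ^ 2 * (1 / cosh (k * x)) ^ 4 * tanh (k * x) ^ 2) * hk
    + 3 * a ^ 3 * (1 / cosh (k * x)) ^ 4 * tanh_sq_add_inv_cosh_sq (k * x)

theorem sech_sq_profile_deriv_deriv (x : ℝ) :
    2 * c ^ 2 * deriv (deriv fun x => a * (1 / cosh (k * x)) ^ 2) x
      = 3 * (a * (1 / cosh (k * x)) ^ 2) * (2 * a - 3 * (a * (1 / cosh (k * x)) ^ 2)) := by
  rw [(hasDerivAt_deriv_sech_sq_profile a k x).deriv]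
  linear_combination (a * (1 / cosh (k * x)) ^ 2 * (2 - 3 * (1 / cosh (k * x)) ^ 2)) * hk

end SechSqProfile

theorem isSolitaryProfile_sech_sq {c k : ℝ} (hk : 4 * c ^ 2 * k ^ 2 = 3 * (c ^ 2 - 1)) :
    IsSolitaryProfile c fun x => (c ^ 2 - 1) * (1 / cosh (k * x)) ^ 2 where
  contDiff := by fun_prop (disch := exact fun x => (cosh_pos _).ne')
  one_add_ne_zero s := by
    have : 0 ≤ c ^ 2 - 1 := by nlinarith
    positivity
  deriv_sq := sech_sq_profile_deriv_sq hk
  deriv_deriv := sech_sq_profile_deriv_deriv hk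

theorem four_mul_sq_mul_wavenumber_sq {c : ℝ} (hc : 1 ≤ c ^ 2) :
    4 * c ^ 2 * (√3 / 2 * √((c ^ 2 - 1) / c ^ 2)) ^ 2 = 3 * (c ^ 2 - 1) := by
  have : c ≠ 0 := by rintro rfl; norm_num at hc
  rw [mul_pow, div_pow, sq_sqrt (by norm_num), sq_sqrt (div_nonneg (by linarith) (sq_nonneg c))]
  field_simp
  ring

section TravellingWaveSolution

variable {c : ℝ} {Z U : ℝ → ℝ} {ζ u h : ℝ → ℝ → ℝ}
  (hU : U = fun s => c * Z s / (1 + Z s)) (hζ : ζ = fun t x => Z (x - c * t))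
  (hu : u = fun t x => U (x - c * t)) (hh : h = fun t x => 1 + ζ t x)
include hU hζ hu hh

theorem sgn_mass_eq_of_travelling (hH : ∀ s, 1 + Z s ≠ 0) (t x : ℝ) :
    deriv (fun t' => ζ t' x) t + deriv (fun x' => h t x' * u t x') x = 0 := by
  have hflux : ∀ x', h t x' * u t x' = c * Z (x' - c * t) := fun x' => by
    have := hH (x' - c * t)
    rw [hu, hU, hh, hζ]
    field_simp
  simp only [hflux, hζ]
  rw [deriv_comp_const_sub_mul, deriv_const_mul_field, deriv_comp_sub_const]
  ring

theorem IsSolitaryProfile.sgn_momentum_eq (hZ : IsSolitaryProfile c Z) (t x : ℝ) :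
    deriv (fun t' => momentumDensity (h t') (u t') x) t + deriv (ζ t) x + u t x * deriv (u t) x
      = deriv (dispersiveFlux (h t) (u t)) x := by
  have hM : ∀ t', momentumDensity (h t') (u t') x
      = momentumDensity (fun s => 1 + Z s) U (x - c * t') :=
    fun t' => by subst hh hζ hu; exact momentumDensity_comp_sub (fun s => 1 + Z s) U (c * t') x
  have hF : dispersiveFlux (h t) (u t)
      = fun x' => dispersiveFlux (fun s => 1 + Z s) U (x' - c * t) :=
    funext fun x' => by subst hh hζ hu; exact dispersiveFlux_comp_sub (fun s => 1 + Z s) U (c * t) x'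
  simp only [hM, hF]
  simp only [hζ, hu]
  rw [deriv_comp_const_sub_mul, deriv_comp_sub_const, deriv_comp_sub_const, deriv_comp_sub_const]
  subst hU
  exact hZ.momentum_eq _

end TravellingWaveSolution

end SGN

open SGN

/-- The explicit solitary wave of the Serre-Green-Naghdi equations: for `c > 1`,
`ζ(t,x) = ζ_c(x − ct)` and `u(t,x) = u_c(x − ct)`, with
`ζ_c(x) = (c² − 1) sech²((√3/2) √((c²−1)/c²) x)` and `u_c = c ζ_c/(1 + ζ_c)`,
satisfy both equations of the SGN system (units with `g = d = 1`, `h = 1 + ζ`). -/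
theorem sgn_explicit_solitary_wave_solves_SGN (c : ℝ) (hc : 1 < c)
    (ζc uc : ℝ → ℝ)
    (hζc : ζc = fun x : ℝ =>
      (c ^ 2 - 1) * (1 / Real.cosh ((Real.sqrt 3 / 2) * Real.sqrt ((c ^ 2 - 1) / c ^ 2) * x)) ^ 2)
    (huc : uc = fun x => c * ζc x / (1 + ζc x))
    (ζ u h : ℝ → ℝ → ℝ)
    (hζ : ζ = fun t x => ζc (x - c * t))
    (hu : u = fun t x => uc (x - c * t))
    (hh : h = fun t x => 1 + ζ t x) :
    ∀ t x : ℝ,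
      (deriv (fun t' => ζ t' x) t + deriv (fun x' => h t x' * u t x') x = 0) ∧
      (deriv (fun t' => u t' x
            - (1 / (3 * h t' x)) * deriv (fun x' => (h t' x') ^ 3 * deriv (fun y => u t' y) x') x) t
          + deriv (fun x' => ζ t x') x + u t x * deriv (fun x' => u t x') x
        = deriv (fun x' =>
            (u t x' / (3 * h t x')) * deriv (fun y => (h t y) ^ 3 * deriv (fun z => u t z) y) x'
              + (1 / 2) * (h t x') ^ 2 * (deriv (fun z => u t z) x') ^ 2) x) := by
  have hZ : IsSolitaryProfile c ζc := hζc ▸ isSolitaryProfile_sech_sq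
    (four_mul_sq_mul_wavenumber_sq (by nlinarith))
  exact fun t x => ⟨sgn_mass_eq_of_travelling huc hζ hu hh hZ.one_add_ne_zero t x,
    hZ.sgn_momentum_eq huc hζ hu hh t x⟩
end

section
/- Let L > 0, let I ⊆ ℝ be an open interval, and let ζ, u : ℝ × I → ℝ be a sufficiently smooth solution of the Serre–Green–Naghdi equations with h := 1 + ζ > 0 everywhere, such that ζ(·,t) and u(·,t) are L-periodic in x for every t ∈ I. Then the total energy t ↦ ∫₀^L ( ζ(x,t)² + h(x,t)·u(x,t)² + (1/3)·h(x,t)³·(∂xu(x,t))² ) dx is constant on I. -/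
open Set Metric intervalIntegral MeasureTheory

namespace SGNaux

variable {S : Set (ℝ × ℝ)} {f : ℝ × ℝ → ℝ} {p : ℝ × ℝ}

noncomputable def pd (v : ℝ × ℝ) (f : ℝ × ℝ → ℝ) : ℝ × ℝ → ℝ := fun p => fderiv ℝ f p v

lemma hasDerivAt_pdx (hS : IsOpen S) (hf : ContDiffOn ℝ (⊤ : ℕ∞) f S) (hp : p ∈ S) :
    HasDerivAt (fun x => f (x, p.2)) (pd (1, 0) f p) p.1 := by
  have hdf : HasFDerivAt f (fderiv ℝ f p) p :=
    ((hf.contDiffAt (hS.mem_nhds hp)).differentiableAt (by simp)).hasFDerivAt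
  have hc : HasDerivAt (fun x : ℝ => (x, p.2)) ((1 : ℝ), (0 : ℝ)) p.1 :=
    (hasDerivAt_id p.1).prodMk (hasDerivAt_const p.1 p.2)
  exact hdf.comp_hasDerivAt p.1 hc

lemma hasDerivAt_pdt (hS : IsOpen S) (hf : ContDiffOn ℝ (⊤ : ℕ∞) f S) (hp : p ∈ S) :
    HasDerivAt (fun t => f (p.1, t)) (pd (0, 1) f p) p.2 := by
  have hdf : HasFDerivAt f (fderiv ℝ f p) p :=
    ((hf.contDiffAt (hS.mem_nhds hp)).differentiableAt (by simp)).hasFDerivAt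
  have hc : HasDerivAt (fun t : ℝ => (p.1, t)) ((0 : ℝ), (1 : ℝ)) p.2 :=
    (hasDerivAt_const p.2 p.1).prodMk (hasDerivAt_id p.2)
  exact hdf.comp_hasDerivAt p.2 hc

lemma contDiffOn_pd (hS : IsOpen S) (hf : ContDiffOn ℝ (⊤ : ℕ∞) f S) (v : ℝ × ℝ) :
    ContDiffOn ℝ (⊤ : ℕ∞) (pd v f) S :=
  (hf.fderiv_of_isOpen hS (by simp)).clm_apply contDiffOn_const

lemma pd_comm (hS : IsOpen S) (hf : ContDiffOn ℝ (⊤ : ℕ∞) f S) (hp : p ∈ S) :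
    pd (0, 1) (pd (1, 0) f) p = pd (1, 0) (pd (0, 1) f) p := by
  have hd : ∀ᶠ q in nhds p, HasFDerivAt f (fderiv ℝ f q) q := by
    filter_upwards [hS.mem_nhds hp] with q hq using
      ((hf.contDiffAt (hS.mem_nhds hq)).differentiableAt (by simp)).hasFDerivAt
  have hf' : ContDiffOn ℝ (⊤ : ℕ∞) (fderiv ℝ f) S := hf.fderiv_of_isOpen hS (by simp)
  have h2 : HasFDerivAt (fderiv ℝ f) (fderiv ℝ (fderiv ℝ f) p) p :=
    ((hf'.contDiffAt (hS.mem_nhds hp)).differentiableAt (by simp)).hasFDerivAt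
  have hsymm := second_derivative_symmetric_of_eventually hd h2 (1, 0) (0, 1)
  have e1 : ∀ v w : ℝ × ℝ,
      fderiv ℝ (fun q => fderiv ℝ f q v) p w = fderiv ℝ (fderiv ℝ f) p w v := by
    intro v w
    have hc : HasFDerivAt (fun q => fderiv ℝ f q v)
        ((ContinuousLinearMap.apply ℝ ℝ v).comp (fderiv ℝ (fderiv ℝ f) p)) p :=
      (ContinuousLinearMap.apply ℝ ℝ v).hasFDerivAt.comp p h2
    rw [hc.fderiv]; rfl
  show fderiv ℝ (fun q => fderiv ℝ f q (1, 0)) p (0, 1)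
      = fderiv ℝ (fun q => fderiv ℝ f q (0, 1)) p (1, 0)
  rw [e1, e1, hsymm]

noncomputable def ZF (ζ : ℝ → ℝ → ℝ) : ℝ × ℝ → ℝ := fun p => ζ p.1 p.2
noncomputable def UF (u : ℝ → ℝ → ℝ) : ℝ × ℝ → ℝ := fun p => u p.1 p.2
noncomputable def HZF (ζ : ℝ → ℝ → ℝ) : ℝ × ℝ → ℝ := fun p => 1 + ZF ζ p
noncomputable def WF (u : ℝ → ℝ → ℝ) : ℝ × ℝ → ℝ := pd (1, 0) (UF u)
noncomputable def PF (ζ u : ℝ → ℝ → ℝ) : ℝ × ℝ → ℝ := fun p => HZF ζ p ^ 3 * WF u p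
noncomputable def MF (ζ u : ℝ → ℝ → ℝ) : ℝ × ℝ → ℝ := pd (1, 0) (PF ζ u)
noncomputable def GF (ζ u : ℝ → ℝ → ℝ) : ℝ × ℝ → ℝ := pd (0, 1) (PF ζ u)
noncomputable def RF (ζ u : ℝ → ℝ → ℝ) : ℝ × ℝ → ℝ :=
  fun p => UF u p * MF ζ u p / (3 * HZF ζ p) + 1 / 2 * HZF ζ p ^ 2 * WF u p ^ 2
noncomputable def f3F (ζ u : ℝ → ℝ → ℝ) : ℝ × ℝ → ℝ :=
  fun p => ZF ζ p ^ 2 + HZF ζ p * UF u p ^ 2 + 1 / 3 * HZF ζ p ^ 3 * WF u p ^ 2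
noncomputable def FlF (ζ u : ℝ → ℝ → ℝ) : ℝ × ℝ → ℝ :=
  fun p => HZF ζ p * UF u p * (2 * RF ζ u p - 2 * ZF ζ p - UF u p ^ 2)
    + 2 / 3 * UF u p * GF ζ u p

end SGNaux

open SGNaux

set_option maxHeartbeats 2000000 in
/-- Conservation of the total energy `∫₀ᴸ (ζ² + h u² + (1/3) h³ (∂xu)²) dx` for
`L`-periodic, sufficiently smooth solutions of the Serre-Green-Naghdi equations
(the integrand is the conserved energy density `f₃` with `g = 1`). -/
theorem sgn_periodic_energy_conserved (L : ℝ) (hL : 0 < L)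
    (I : Set ℝ) (hI : IsOpen I) (hI' : I.OrdConnected)
    (ζ u : ℝ → ℝ → ℝ)
    (hζsmooth : ContDiffOn ℝ (⊤ : ℕ∞) (fun p : ℝ × ℝ => ζ p.1 p.2) (Set.univ ×ˢ I))
    (husmooth : ContDiffOn ℝ (⊤ : ℕ∞) (fun p : ℝ × ℝ => u p.1 p.2) (Set.univ ×ˢ I))
    (h : ℝ → ℝ → ℝ) (hh : h = fun x t => 1 + ζ x t)
    (hpos : ∀ x : ℝ, ∀ t ∈ I, 0 < h x t)
    (hper : ∀ x : ℝ, ∀ t ∈ I, ζ (x + L) t = ζ x t ∧ u (x + L) t = u x t)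
    (mass : ∀ x : ℝ, ∀ t ∈ I,
      deriv (fun t' => ζ x t') t + deriv (fun y => h y t * u y t) x = 0)
    (mom : ∀ x : ℝ, ∀ t ∈ I,
      deriv (fun t' => u x t'
          - (1 / (3 * h x t')) * deriv (fun y => (h y t') ^ 3 * deriv (fun z => u z t') y) x) t
        + deriv (fun y => ζ y t) x + u x t * deriv (fun y => u y t) x
      = deriv (fun y =>
          (u y t / (3 * h y t)) * deriv (fun z => (h z t) ^ 3 * deriv (fun w => u w t) z) y
            + (1 / 2) * (h y t) ^ 2 * (deriv (fun z => u z t) y) ^ 2) x)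
 :
    ∀ t₁ ∈ I, ∀ t₂ ∈ I,
      (∫ x in (0:ℝ)..L, ((ζ x t₁) ^ 2 + h x t₁ * (u x t₁) ^ 2
          + (1 / 3) * (h x t₁) ^ 3 * (deriv (fun y => u y t₁) x) ^ 2))
        = ∫ x in (0:ℝ)..L, ((ζ x t₂) ^ 2 + h x t₂ * (u x t₂) ^ 2
          + (1 / 3) * (h x t₂) ^ 3 * (deriv (fun y => u y t₂) x) ^ 2) := by
  intro t₁ ht₁ t₂ ht₂
  have hval : ∀ x t, h x t = 1 + ζ x t := fun x t => by rw [hh]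
  set S : Set (ℝ × ℝ) := Set.univ ×ˢ I with hSdef
  have hSopen : IsOpen S := isOpen_univ.prod hI
  have hmemS : ∀ (x t : ℝ), t ∈ I → (x, t) ∈ S := fun x t ht => ⟨trivial, ht⟩
  have hZ : ContDiffOn ℝ (⊤ : ℕ∞) (ZF ζ) S := hζsmooth
  have hU : ContDiffOn ℝ (⊤ : ℕ∞) (UF u) S := husmooth
  have hH : ContDiffOn ℝ (⊤ : ℕ∞) (HZF ζ) S := contDiffOn_const.add hZ
  have hWs : ContDiffOn ℝ (⊤ : ℕ∞) (WF u) S := contDiffOn_pd hSopen hU (1, 0)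
  have hPs : ContDiffOn ℝ (⊤ : ℕ∞) (PF ζ u) S := (hH.pow 3).mul hWs
  have hMs : ContDiffOn ℝ (⊤ : ℕ∞) (MF ζ u) S := contDiffOn_pd hSopen hPs (1, 0)
  have hGs : ContDiffOn ℝ (⊤ : ℕ∞) (GF ζ u) S := contDiffOn_pd hSopen hPs (0, 1)
  have hHpos : ∀ (x t : ℝ), t ∈ I → 0 < HZF ζ (x, t) := by
    intro x t ht
    have := hpos x t ht
    rw [hval] at this
    exact this
  have hHne : ∀ p ∈ S, (3 : ℝ) * HZF ζ p ≠ 0 := by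
    rintro ⟨x, t⟩ hp
    have := hHpos x t hp.2
    positivity
  have hRs : ContDiffOn ℝ (⊤ : ℕ∞) (RF ζ u) S :=
    ((hU.mul hMs).div (contDiffOn_const.mul hH) hHne).add
      ((contDiffOn_const.mul (hH.pow 2)).mul (hWs.pow 2))
  have hf3s : ContDiffOn ℝ (⊤ : ℕ∞) (f3F ζ u) S :=
    ((hZ.pow 2).add (hH.mul (hU.pow 2))).add
      ((contDiffOn_const.mul (hH.pow 3)).mul (hWs.pow 2))
  have hFls : ContDiffOn ℝ (⊤ : ℕ∞) (FlF ζ u) S :=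
    ((hH.mul hU).mul (((contDiffOn_const.mul hRs).sub (contDiffOn_const.mul hZ)).sub
      (hU.pow 2))).add ((contDiffOn_const.mul hU).mul hGs)

  -- translation of the mass equation to joint partial derivatives
  have massJ : ∀ (x t : ℝ), t ∈ I →
      pd (0, 1) (ZF ζ) (x, t)
        = -(pd (1, 0) (ZF ζ) (x, t) * UF u (x, t) + HZF ζ (x, t) * WF u (x, t)) := by
    intro x t ht
    have hp := hmemS x t ht
    have e1 : deriv (fun t' => ζ x t') t = pd (0, 1) (ZF ζ) (x, t) :=
      (show HasDerivAt (fun t' => ζ x t') (pd (0, 1) (ZF ζ) (x, t)) t from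
        hasDerivAt_pdt hSopen hZ hp).deriv
    have hZx : HasDerivAt (fun y => ζ y t) (pd (1, 0) (ZF ζ) (x, t)) x :=
      hasDerivAt_pdx hSopen hZ hp
    have hUx : HasDerivAt (fun y => u y t) (WF u (x, t)) x := hasDerivAt_pdx hSopen hU hp
    have hHx : HasDerivAt (fun y => h y t) (pd (1, 0) (ZF ζ) (x, t)) x := by
      have hfun : (fun y => h y t) = fun y => 1 + ζ y t := funext fun y => hval y t
      rw [hfun]
      exact hZx.const_add 1
    have e2 : deriv (fun y => h y t * u y t) x
        = pd (1, 0) (ZF ζ) (x, t) * u x t + h x t * WF u (x, t) := (hHx.mul hUx).deriv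
    have hm := mass x t ht
    rw [e1, e2, hval] at hm
    have : u x t = UF u (x, t) := rfl
    rw [this] at hm
    have : (1 : ℝ) + ζ x t = HZF ζ (x, t) := rfl
    rw [this] at hm
    linarith

  -- identification of the inner x-derivative with MF
  have hMder : ∀ (y t' : ℝ), t' ∈ I →
      deriv (fun z => h z t' ^ 3 * deriv (fun w => u w t') z) y = MF ζ u (y, t') := by
    intro y t' ht'
    have hfun : (fun z => h z t' ^ 3 * deriv (fun w => u w t') z)
        = fun z => PF ζ u (z, t') := by
      funext z
      have e : deriv (fun w => u w t') z = WF u (z, t') :=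
        (show HasDerivAt (fun w => u w t') (WF u (z, t')) z from
          hasDerivAt_pdx hSopen hU (hmemS z t' ht')).deriv
      rw [e, hval]
      rfl
    rw [hfun]
    exact (show HasDerivAt (fun z => PF ζ u (z, t')) (MF ζ u (y, t')) y from
      hasDerivAt_pdx hSopen hPs (hmemS y t' ht')).deriv
  -- translation of the momentum equation
  have momJ : ∀ (x t : ℝ), t ∈ I →
      pd (0, 1) (UF u) (x, t)
        - (((0 : ℝ) * (3 * HZF ζ (x, t)) - 1 * (3 * pd (0, 1) (ZF ζ) (x, t)))
              / (3 * HZF ζ (x, t)) ^ 2 * MF ζ u (x, t)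
            + 1 / (3 * HZF ζ (x, t)) * pd (0, 1) (MF ζ u) (x, t))
        + pd (1, 0) (ZF ζ) (x, t) + UF u (x, t) * WF u (x, t)
      = pd (1, 0) (RF ζ u) (x, t) := by
    intro x t ht
    have hp := hmemS x t ht
    have hne : (3 : ℝ) * HZF ζ (x, t) ≠ 0 := hHne (x, t) hp
    have hUt : HasDerivAt (fun t' => UF u (x, t')) (pd (0, 1) (UF u) (x, t)) t :=
      hasDerivAt_pdt hSopen hU hp
    have hHt : HasDerivAt (fun t' => HZF ζ (x, t')) (pd (0, 1) (ZF ζ) (x, t)) t := by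
      exact (show HasDerivAt (fun t' => ZF ζ (x, t')) (pd (0, 1) (ZF ζ) (x, t)) t from
        hasDerivAt_pdt hSopen hZ hp).const_add 1
    have hMt : HasDerivAt (fun t' => MF ζ u (x, t')) (pd (0, 1) (MF ζ u) (x, t)) t :=
      hasDerivAt_pdt hSopen hMs hp
    have hquot : HasDerivAt (fun t' => 1 / (3 * HZF ζ (x, t')))
        (((0 : ℝ) * (3 * HZF ζ (x, t)) - 1 * (3 * pd (0, 1) (ZF ζ) (x, t)))
          / (3 * HZF ζ (x, t)) ^ 2) t := by
      exact (hasDerivAt_const t (1 : ℝ)).div (hHt.const_mul 3) hne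
    have hfull : HasDerivAt
        (fun t' => UF u (x, t') - 1 / (3 * HZF ζ (x, t')) * MF ζ u (x, t'))
        (pd (0, 1) (UF u) (x, t)
          - (((0 : ℝ) * (3 * HZF ζ (x, t)) - 1 * (3 * pd (0, 1) (ZF ζ) (x, t)))
                / (3 * HZF ζ (x, t)) ^ 2 * MF ζ u (x, t)
              + 1 / (3 * HZF ζ (x, t)) * pd (0, 1) (MF ζ u) (x, t))) t := by
      exact hUt.sub (hquot.mul hMt)
    have heq : (fun t' => u x t'
          - (1 / (3 * h x t')) * deriv (fun y => (h y t') ^ 3 * deriv (fun z => u z t') y) x)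
        =ᶠ[nhds t] (fun t' => UF u (x, t') - 1 / (3 * HZF ζ (x, t')) * MF ζ u (x, t')) := by
      filter_upwards [hI.mem_nhds ht] with t' ht'
      rw [hMder x t' ht', hval]
      rfl
    have eL : deriv (fun t' => u x t'
          - (1 / (3 * h x t')) * deriv (fun y => (h y t') ^ 3 * deriv (fun z => u z t') y) x) t
        = pd (0, 1) (UF u) (x, t)
          - (((0 : ℝ) * (3 * HZF ζ (x, t)) - 1 * (3 * pd (0, 1) (ZF ζ) (x, t)))
                / (3 * HZF ζ (x, t)) ^ 2 * MF ζ u (x, t)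
              + 1 / (3 * HZF ζ (x, t)) * pd (0, 1) (MF ζ u) (x, t)) := by
      rw [heq.deriv_eq]
      exact hfull.deriv
    have hRfun : (fun y =>
          (u y t / (3 * h y t)) * deriv (fun z => (h z t) ^ 3 * deriv (fun w => u w t) z) y
            + (1 / 2) * (h y t) ^ 2 * (deriv (fun z => u z t) y) ^ 2)
        = fun y => RF ζ u (y, t) := by
      funext y
      have e2 : deriv (fun z => u z t) y = WF u (y, t) :=
        (show HasDerivAt (fun z => u z t) (WF u (y, t)) y from
          hasDerivAt_pdx hSopen hU (hmemS y t ht)).deriv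
      rw [hMder y t ht, e2, hval]
      simp only [RF, UF, HZF, ZF]
      ring
    have eR : deriv (fun y =>
          (u y t / (3 * h y t)) * deriv (fun z => (h z t) ^ 3 * deriv (fun w => u w t) z) y
            + (1 / 2) * (h y t) ^ 2 * (deriv (fun z => u z t) y) ^ 2) x
        = pd (1, 0) (RF ζ u) (x, t) := by
      rw [hRfun]
      exact (show HasDerivAt (fun y => RF ζ u (y, t)) (pd (1, 0) (RF ζ u) (x, t)) x from
        hasDerivAt_pdx hSopen hRs hp).deriv
    have e3 : deriv (fun y => ζ y t) x = pd (1, 0) (ZF ζ) (x, t) :=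
      (show HasDerivAt (fun y => ζ y t) (pd (1, 0) (ZF ζ) (x, t)) x from
        hasDerivAt_pdx hSopen hZ hp).deriv
    have e4 : deriv (fun y => u y t) x = WF u (x, t) :=
      (show HasDerivAt (fun y => u y t) (WF u (x, t)) x from
        hasDerivAt_pdx hSopen hU hp).deriv
    have hm := mom x t ht
    rw [eL, eR, e3, e4] at hm
    have : u x t = UF u (x, t) := rfl
    rw [this] at hm
    exact hm

  -- the key pointwise identity: time derivative of the energy density is a spatial derivative
  have key : ∀ (x t : ℝ), t ∈ I →
      pd (0, 1) (f3F ζ u) (x, t) = pd (1, 0) (FlF ζ u) (x, t) := by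
    intro x t ht
    have hp := hmemS x t ht
    -- t-direction derivatives
    have hZt : HasDerivAt (fun t' => ZF ζ (x, t')) (pd (0, 1) (ZF ζ) (x, t)) t :=
      hasDerivAt_pdt hSopen hZ hp
    have hUt : HasDerivAt (fun t' => UF u (x, t')) (pd (0, 1) (UF u) (x, t)) t :=
      hasDerivAt_pdt hSopen hU hp
    have hWt : HasDerivAt (fun t' => WF u (x, t')) (pd (0, 1) (WF u) (x, t)) t :=
      hasDerivAt_pdt hSopen hWs hp
    have hHt : HasDerivAt (fun t' => HZF ζ (x, t')) (pd (0, 1) (ZF ζ) (x, t)) t := by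
      exact hZt.const_add 1
    -- expansion of the t-derivative of the energy density
    have h1 := ((hZt.pow 2).add (hHt.mul (hUt.pow 2))).add
      (((hHt.pow 3).const_mul (1 / 3 : ℝ)).mul (hWt.pow 2))
    have e1 := (hasDerivAt_pdt hSopen hf3s hp).unique h1
    -- expansion of the t-derivative of P (gives G)
    have h5 := (hHt.pow 3).mul hWt
    have e3 : GF ζ u (x, t) = (3 : ℕ) * HZF ζ (x, t) ^ (3 - 1) * pd (0, 1) (ZF ζ) (x, t)
          * WF u (x, t) + HZF ζ (x, t) ^ 3 * pd (0, 1) (WF u) (x, t) := by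
      exact (hasDerivAt_pdt hSopen hPs hp).unique h5
    -- x-direction derivatives
    have hZx : HasDerivAt (fun y => ZF ζ (y, t)) (pd (1, 0) (ZF ζ) (x, t)) x :=
      hasDerivAt_pdx hSopen hZ hp
    have hUx : HasDerivAt (fun y => UF u (y, t)) (WF u (x, t)) x :=
      hasDerivAt_pdx hSopen hU hp
    have hRx : HasDerivAt (fun y => RF ζ u (y, t)) (pd (1, 0) (RF ζ u) (x, t)) x :=
      hasDerivAt_pdx hSopen hRs hp
    have hGx : HasDerivAt (fun y => GF ζ u (y, t)) (pd (1, 0) (GF ζ u) (x, t)) x :=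
      hasDerivAt_pdx hSopen hGs hp
    have hHx : HasDerivAt (fun y => HZF ζ (y, t)) (pd (1, 0) (ZF ζ) (x, t)) x := by
      exact hZx.const_add 1
    -- expansion of the x-derivative of the flux
    have h2 := ((hHx.mul hUx).mul (((hRx.const_mul (2 : ℝ)).sub
        (hZx.const_mul (2 : ℝ))).sub (hUx.pow 2))).add
      ((hUx.const_mul (2 / 3 : ℝ)).mul hGx)
    have e2 := (hasDerivAt_pdx hSopen hFls hp).unique h2
    -- Clairaut: x-derivative of G equals t-derivative of M
    have e4 : pd (1, 0) (GF ζ u) (x, t) = pd (0, 1) (MF ζ u) (x, t) :=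
      (pd_comm hSopen hPs hp).symm
    -- the equations of motion
    have Emass := massJ x t ht
    have Emom := momJ x t ht
    have EUt : pd (0, 1) (UF u) (x, t)
        = pd (1, 0) (RF ζ u) (x, t)
          + (((0 : ℝ) * (3 * HZF ζ (x, t)) - 1 * (3 * pd (0, 1) (ZF ζ) (x, t)))
                / (3 * HZF ζ (x, t)) ^ 2 * MF ζ u (x, t)
              + 1 / (3 * HZF ζ (x, t)) * pd (0, 1) (MF ζ u) (x, t))
          - pd (1, 0) (ZF ζ) (x, t) - UF u (x, t) * WF u (x, t) := by linarith
    have hne : (1 : ℝ) + ZF ζ (x, t) ≠ 0 := by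
      have := hHpos x t ht
      simp only [HZF] at this
      exact ne_of_gt this
    rw [e1, e2]
    rw [e3, e4, EUt, Emass]
    simp only [RF, HZF, WF, Pi.mul_apply, Pi.add_apply, Pi.sub_apply, Pi.pow_apply]
    field_simp [hne]
    ring

  -- periodicity of all the building blocks
  have perZ : ∀ (x t : ℝ), t ∈ I → ZF ζ (x + L, t) = ZF ζ (x, t) := fun x t ht => (hper x t ht).1
  have perU : ∀ (x t : ℝ), t ∈ I → UF u (x + L, t) = UF u (x, t) := fun x t ht => (hper x t ht).2
  have perH : ∀ (x t : ℝ), t ∈ I → HZF ζ (x + L, t) = HZF ζ (x, t) := by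
    intro x t ht
    simp only [HZF]
    rw [perZ x t ht]
  have perW : ∀ (x t : ℝ), t ∈ I → WF u (x + L, t) = WF u (x, t) := by
    intro x t ht
    have e1 : deriv (fun y => UF u (y, t)) (x + L) = WF u (x + L, t) :=
      (show HasDerivAt (fun y => UF u (y, t)) (WF u (x + L, t)) (x + L) from
        hasDerivAt_pdx hSopen hU (hmemS (x + L) t ht)).deriv
    have e2 : deriv (fun y => UF u (y, t)) x = WF u (x, t) :=
      (show HasDerivAt (fun y => UF u (y, t)) (WF u (x, t)) x from
        hasDerivAt_pdx hSopen hU (hmemS x t ht)).deriv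
    have hfun : (fun y => UF u (y + L, t)) = fun y => UF u (y, t) :=
      funext fun y => perU y t ht
    calc WF u (x + L, t) = deriv (fun y => UF u (y, t)) (x + L) := e1.symm
      _ = deriv (fun y => UF u (y + L, t)) x :=
            (deriv_comp_add_const (fun y => UF u (y, t)) L x).symm
      _ = deriv (fun y => UF u (y, t)) x := by rw [hfun]
      _ = WF u (x, t) := e2
  have perP : ∀ (x t : ℝ), t ∈ I → PF ζ u (x + L, t) = PF ζ u (x, t) := by
    intro x t ht
    simp only [PF]
    rw [perH x t ht, perW x t ht]
  have perM : ∀ (x t : ℝ), t ∈ I → MF ζ u (x + L, t) = MF ζ u (x, t) := by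
    intro x t ht
    have e1 : deriv (fun y => PF ζ u (y, t)) (x + L) = MF ζ u (x + L, t) :=
      (show HasDerivAt (fun y => PF ζ u (y, t)) (MF ζ u (x + L, t)) (x + L) from
        hasDerivAt_pdx hSopen hPs (hmemS (x + L) t ht)).deriv
    have e2 : deriv (fun y => PF ζ u (y, t)) x = MF ζ u (x, t) :=
      (show HasDerivAt (fun y => PF ζ u (y, t)) (MF ζ u (x, t)) x from
        hasDerivAt_pdx hSopen hPs (hmemS x t ht)).deriv
    have hfun : (fun y => PF ζ u (y + L, t)) = fun y => PF ζ u (y, t) :=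
      funext fun y => perP y t ht
    calc MF ζ u (x + L, t) = deriv (fun y => PF ζ u (y, t)) (x + L) := e1.symm
      _ = deriv (fun y => PF ζ u (y + L, t)) x :=
            (deriv_comp_add_const (fun y => PF ζ u (y, t)) L x).symm
      _ = deriv (fun y => PF ζ u (y, t)) x := by rw [hfun]
      _ = MF ζ u (x, t) := e2
  have perG : ∀ (x t : ℝ), t ∈ I → GF ζ u (x + L, t) = GF ζ u (x, t) := by
    intro x t ht
    have e1 : deriv (fun t' => PF ζ u (x + L, t')) t = GF ζ u (x + L, t) :=
      (show HasDerivAt (fun t' => PF ζ u (x + L, t')) (GF ζ u (x + L, t)) t from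
        hasDerivAt_pdt hSopen hPs (hmemS (x + L) t ht)).deriv
    have e2 : deriv (fun t' => PF ζ u (x, t')) t = GF ζ u (x, t) :=
      (show HasDerivAt (fun t' => PF ζ u (x, t')) (GF ζ u (x, t)) t from
        hasDerivAt_pdt hSopen hPs (hmemS x t ht)).deriv
    have heq : (fun t' => PF ζ u (x + L, t')) =ᶠ[nhds t] fun t' => PF ζ u (x, t') := by
      filter_upwards [hI.mem_nhds ht] with t' ht' using perP x t' ht'
    rw [← e1, ← e2, heq.deriv_eq]
  have perFl : ∀ (x t : ℝ), t ∈ I → FlF ζ u (x + L, t) = FlF ζ u (x, t) := by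
    intro x t ht
    simp only [FlF, RF]
    rw [perH x t ht, perZ x t ht, perU x t ht, perW x t ht, perM x t ht, perG x t ht]
  -- continuity along horizontal lines
  have contLine : ∀ (g : ℝ × ℝ → ℝ), ContDiffOn ℝ (⊤ : ℕ∞) g S → ∀ t ∈ I,
      Continuous fun x => g (x, t) := by
    intro g hg t ht
    exact hg.continuousOn.comp_continuous (continuous_id.prodMk continuous_const)
      fun x => hmemS x t ht
  -- the space integral of the t-derivative of the energy density vanishes
  have Ezero : ∀ t ∈ I, (∫ x in (0:ℝ)..L, pd (0, 1) (f3F ζ u) (x, t)) = 0 := by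
    intro t ht
    have hcongr : (∫ x in (0:ℝ)..L, pd (0, 1) (f3F ζ u) (x, t))
        = ∫ x in (0:ℝ)..L, pd (1, 0) (FlF ζ u) (x, t) :=
      intervalIntegral.integral_congr fun x _ => key x t ht
    rw [hcongr]
    have hderiv : ∀ x ∈ uIcc (0:ℝ) L,
        HasDerivAt (fun y => FlF ζ u (y, t)) (pd (1, 0) (FlF ζ u) (x, t)) x :=
      fun x _ => hasDerivAt_pdx hSopen hFls (hmemS x t ht)
    have hint : IntervalIntegrable (fun x => pd (1, 0) (FlF ζ u) (x, t)) volume 0 L :=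
      (contLine _ (contDiffOn_pd hSopen hFls (1, 0)) t ht).intervalIntegrable 0 L
    rw [intervalIntegral.integral_eq_sub_of_hasDerivAt hderiv hint]
    have hp0 := perFl 0 t ht
    rw [zero_add] at hp0
    rw [hp0, sub_self]
  -- differentiation under the integral sign
  have Ederiv : ∀ t ∈ I, HasDerivAt (fun s => ∫ x in (0:ℝ)..L, f3F ζ u (x, s))
      (∫ x in (0:ℝ)..L, pd (0, 1) (f3F ζ u) (x, t)) t := by
    intro t ht
    obtain ⟨ε, hε, hball⟩ := Metric.isOpen_iff.mp hI t ht
    have hcb : closedBall t (ε / 2) ⊆ I := (closedBall_subset_ball (by linarith)).trans hball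
    have hK : IsCompact (uIcc (0:ℝ) L ×ˢ closedBall t (ε / 2)) :=
      isCompact_uIcc.prod (isCompact_closedBall t (ε / 2))
    have hKS : (uIcc (0:ℝ) L ×ˢ closedBall t (ε / 2)) ⊆ S := by
      rintro ⟨x, s⟩ ⟨hx, hs⟩
      exact hmemS x s (hcb hs)
    obtain ⟨C, hC⟩ := hK.exists_bound_of_continuousOn
      ((contDiffOn_pd hSopen hf3s (0, 1)).continuousOn.mono hKS)
    have hmeas : ∀ᶠ s in nhds t, AEStronglyMeasurable (fun x => f3F ζ u (x, s))
        (volume.restrict (uIoc (0:ℝ) L)) := by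
      filter_upwards [hI.mem_nhds ht] with s hs using
        (contLine _ hf3s s hs).aestronglyMeasurable
    have hintt : IntervalIntegrable (fun x => f3F ζ u (x, t)) volume 0 L :=
      (contLine _ hf3s t ht).intervalIntegrable 0 L
    have hmeas' : AEStronglyMeasurable (fun x => pd (0, 1) (f3F ζ u) (x, t))
        (volume.restrict (uIoc (0:ℝ) L)) :=
      (contLine _ (contDiffOn_pd hSopen hf3s (0, 1)) t ht).aestronglyMeasurable
    have hbound : ∀ᵐ x ∂volume, x ∈ uIoc (0:ℝ) L → ∀ s ∈ ball t (ε / 2),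
        ‖pd (0, 1) (f3F ζ u) (x, s)‖ ≤ C :=
      ae_of_all _ fun x hx s hs =>
        hC (x, s) ⟨uIoc_subset_uIcc hx, ball_subset_closedBall hs⟩
    have hbint : IntervalIntegrable (fun _ : ℝ => C) volume 0 L := intervalIntegrable_const
    have hdiff : ∀ᵐ x ∂volume, x ∈ uIoc (0:ℝ) L → ∀ s ∈ ball t (ε / 2),
        HasDerivAt (fun s' => f3F ζ u (x, s')) (pd (0, 1) (f3F ζ u) (x, s)) s :=
      ae_of_all _ fun x hx s hs =>
        hasDerivAt_pdt hSopen hf3s (hmemS x s (hcb (ball_subset_closedBall hs)))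
    exact (intervalIntegral.hasDerivAt_integral_of_dominated_loc_of_deriv_le
      (ball_mem_nhds t (half_pos hε)) hmeas hintt hmeas' hbound hbint hdiff).2
  -- the energy is constant on I
  have hEzero : ∀ s ∈ uIcc t₁ t₂,
      HasDerivAt (fun s => ∫ x in (0:ℝ)..L, f3F ζ u (x, s)) ((0:ℝ)) s := by
    intro s hs
    have hsI : s ∈ I := hI'.uIcc_subset ht₁ ht₂ hs
    have hd := Ederiv s hsI
    rwa [Ezero s hsI] at hd
  have h0 := intervalIntegral.integral_eq_sub_of_hasDerivAt hEzero
    (intervalIntegrable_const : IntervalIntegrable (fun _ : ℝ => (0:ℝ)) volume t₁ t₂)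
  simp only [intervalIntegral.integral_const, smul_zero] at h0
  -- translate the goal
  have T : ∀ t ∈ I, (∫ x in (0:ℝ)..L, ((ζ x t) ^ 2 + h x t * (u x t) ^ 2
      + (1 / 3) * (h x t) ^ 3 * (deriv (fun y => u y t) x) ^ 2))
      = ∫ x in (0:ℝ)..L, f3F ζ u (x, t) := by
    intro t ht
    refine intervalIntegral.integral_congr fun x _ => ?_
    have e : deriv (fun y => u y t) x = WF u (x, t) :=
      (show HasDerivAt (fun y => u y t) (WF u (x, t)) x from
        hasDerivAt_pdx hSopen hU (hmemS x t ht)).deriv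
    rw [e, hval]
    simp only [f3F, ZF, UF, HZF]
  rw [T t₁ ht₁, T t₂ ht₂]
  linarith [h0]
end
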